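/- Let P be a finite subset of the Euclidean plane ℝ² with P.ncard = 4 and (Bd(P)).ncard = 3 (so exactly one point of P lies in the interior of the convex hull of the other three). Then (𝒱(P)).ncard = 3, (𝒱^[2](P)).ncard = 1, and 𝒱^[n](P) = ∅ for all n ≥ 3. -/

import Mathlib

/-!
Write `P = {a, b, c, d}` with `d` inside the triangle `abc`. No point has all of `a, b, c` among
its nearest generators: `d` lies strictly inside every disc containing the triangle, so it would
be nearer. Hence the Voronoi vertices of `P` are the circumcentres of the three triangles through
`d`, and each of them is one, because the remaining vertex of `abc` is strictly outside the
corresponding circumcircle. Two of these circumcentres lie on the perpendicular bisector of `a d`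
and the third does not, so they form a non-collinear triple, whose only Voronoi vertex is its own
circumcentre; from then on fewer than three generators are left.
-/

open Set

abbrev Plane : Type := EuclideanSpace ℝ (Fin 2)

/-- The Voronoi cell of a generator `p` for a generating set `P`. -/
def cell (P : Set Plane) (p : Plane) : Set Plane :=
  {x : Plane | ∀ q ∈ P, dist x p ≤ dist x q}

/-- The set of nearest generators of `x` in `P`. -/
def nearest (P : Set Plane) (x : Plane) : Set Plane :=
  {p ∈ P | ∀ q ∈ P, dist x p ≤ dist x q}

/-- The Voronoi vertex set: points with at least 3 nearest generators. -/
def vtx (P : Set Plane) : Set Plane :=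
  {x : Plane | 3 ≤ (nearest P x).encard}

/-- The boundary of a point set: its points on the frontier of its convex hull. -/
def Bd (S : Set Plane) : Set Plane :=
  S ∩ frontier (convexHull ℝ S)

/-- The number of instances of cocircularity. -/
noncomputable def Ic (P : Set Plane) : ℤ :=
  ∑ᶠ x ∈ vtx P, (((nearest P x).ncard : ℤ) - 3)

open Module Metric

section Convex

variable {E : Type*} [NormedAddCommGroup E] [NormedSpace ℝ E] [Nontrivial E]

theorem dist_lt_of_mem_interior_convexHull {s : Set E} {x o : E} {r : ℝ}
    (hx : x ∈ interior (convexHull ℝ s)) (hs : s ⊆ closedBall o r) : dist x o < r := by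
  have := interior_mono (convexHull_min hs (convex_closedBall o r)) hx
  rwa [interior_closedBall', mem_ball] at this

theorem convexHull_sdiff_singleton_of_mem_interior {s : Set E} (hs : s.Finite) {x : E}
    (hx : x ∈ interior (convexHull ℝ s)) : convexHull ℝ (s \ {x}) = convexHull ℝ s := by
  refine (convexHull_mono sdiff_subset).antisymm ?_
  -- Krein–Milman: the hull is that of its extreme points, which lie in `s` but not in the interior.
  conv_lhs =>
    rw [← closure_convexHull_extremePoints (hs.isCompact_convexHull ℝ) (convex_convexHull ℝ s)]
  refine closure_minimal (convexHull_min (fun y hy => subset_convexHull ℝ _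
    ⟨extremePoints_convexHull_subset hy, ?_⟩) (convex_convexHull ℝ _))
    (hs.sdiff.isClosed_convexHull ℝ)
  rintro rfl
  exact (disjoint_interior_extremePoints _).le_bot ⟨hx, hy⟩

theorem dist_lt_of_mem_interior_triangle {a b c d o : E}
    (hd : d ∈ interior (convexHull ℝ {a, b, c}))
    (hab : dist o a = dist o b) (had : dist o a = dist o d) : dist o a < dist o c := by
  by_contra! hc
  have hsub : ({a, b, c} : Set E) ⊆ closedBall o (dist o a) := by
    rintro p (rfl | rfl | rfl) <;> simp [dist_comm p o, ← hab, hc]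
  have := dist_lt_of_mem_interior_convexHull hd hsub
  rw [dist_comm, had] at this
  exact this.false

end Convex

theorem not_collinear_of_mem_of_notMem {k V P : Type*} [DivisionRing k] [AddCommGroup V]
    [Module k V] [AddTorsor V P] {s : AffineSubspace k P} {p₁ p₂ p₃ : P}
    (h₁ : p₁ ∉ s) (h₂ : p₂ ∈ s) (h₃ : p₃ ∈ s) (h₂₃ : p₂ ≠ p₃) :
    ¬Collinear k {p₁, p₂, p₃} := fun h =>
  h₁ <| affineSpan_le.2 (by simp [insert_subset_iff, h₂, h₃])
    (h.mem_affineSpan_of_mem_of_ne (by simp) (by simp) (by simp) h₂₃)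

section TwoDim

attribute [local instance] FiniteDimensional.of_fact_finrank_eq_two

section Normed

variable {V : Type*} [NormedAddCommGroup V] [NormedSpace ℝ V] [Fact (finrank ℝ V = 2)]

theorem not_collinear_of_affineSpan_eq_top {p q r : V} (h : affineSpan ℝ {p, q, r} = ⊤) :
    ¬Collinear ℝ {p, q, r} := by
  intro hcol
  have := hcol.finrank_le_one
  rw [AffineSubspace.vectorSpan_eq_top_of_affineSpan_eq_top _ _ _ h, finrank_top,
    Fact.out (p := finrank ℝ V = 2)] at this
  omega

theorem not_collinear_of_mem_interior_convexHull {u v w d : V}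
    (hd : d ∈ interior (convexHull ℝ {u, v, w})) : ¬Collinear ℝ {u, v, d} := by
  have htop : affineSpan ℝ {u, v, w} = ⊤ := affineSpan_eq_top_of_nonempty_interior ⟨d, hd⟩
  have hrange : range ![u, v, w] = {u, v, w} := by
    rw [Matrix.range_cons, Matrix.range_cons_cons_empty, singleton_union]
  let B : AffineBasis (Fin 3) ℝ V :=
    ⟨![u, v, w], affineIndependent_iff_not_collinear_set.2
      (not_collinear_of_affineSpan_eq_top htop), by rw [hrange, htop]⟩
  have hpos : 0 < B.coord 2 d := by
    have hd' : d ∈ interior (convexHull ℝ (range B)) := by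
      rwa [show (B : Fin 3 → V) = ![u, v, w] from rfl, hrange]
    exact (B.interior_convexHull ▸ hd') 2
  intro hcol
  have huv : u ≠ v := by
    rintro rfl
    exact not_collinear_of_affineSpan_eq_top htop (by simpa using collinear_pair ℝ u w)
  have hline : d ∈ affineSpan ℝ {u, v} :=
    hcol.mem_affineSpan_of_mem_of_ne (by simp) (by simp) (by simp) huv
  have hzero : B.coord 2 d ∈ (affineSpan ℝ {u, v}).map (B.coord 2 : V →ᵃ[ℝ] ℝ) :=
    AffineSubspace.mem_map_of_mem _ hline
  rw [AffineSubspace.map_span, image_pair,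
    show u = B 0 from rfl, show v = B 1 from rfl, B.coord_apply_ne (by decide),
    B.coord_apply_ne (by decide), pair_eq_singleton, AffineSubspace.mem_affineSpan_singleton]
    at hzero
  exact hpos.ne' hzero

end Normed

variable {V : Type*} [NormedAddCommGroup V] [InnerProductSpace ℝ V] [Fact (finrank ℝ V = 2)]

theorem existsUnique_dist_eq_of_not_collinear {p q r : V} (h : ¬Collinear ℝ {p, q, r}) :
    ∃! o : V, dist o p = dist o q ∧ dist o p = dist o r := by
  have hai : AffineIndependent ℝ ![p, q, r] := affineIndependent_iff_not_collinear_set.2 h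
  have hrange : range ![p, q, r] = {p, q, r} := by
    rw [Matrix.range_cons, Matrix.range_cons_cons_empty, singleton_union]
  obtain ⟨s, ⟨-, hs⟩, hsu⟩ := hai.existsUnique_dist_eq
  rw [hrange, insert_subset_iff, insert_subset_iff, singleton_subset_iff] at hs
  obtain ⟨hp, hq, hr⟩ := hs
  refine ⟨s.center, ?_, fun o ho => ?_⟩
  · simp only [Metric.mem_sphere, dist_comm _ s.center] at hp hq hr
    exact ⟨hp.trans hq.symm, hp.trans hr.symm⟩
  · have : (⟨o, dist o p⟩ : EuclideanGeometry.Sphere V) = s := by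
      refine hsu _ ⟨?_, ?_⟩
      · rw [hai.affineSpan_eq_top_iff_card_eq_finrank_add_one.2
          (by simp [Fact.out (p := finrank ℝ V = 2)])]
        exact AffineSubspace.mem_top _ _ _
      · rw [hrange]
        rintro x (rfl | rfl | rfl) <;> simp only [Metric.mem_sphere, dist_comm x o, ← ho.1, ← ho.2]
    exact congrArg EuclideanGeometry.Sphere.center this

end TwoDim

instance : Fact (finrank ℝ Plane = 2) := ⟨finrank_euclideanSpace_fin⟩

theorem nearest_subset (P : Set Plane) (x : Plane) : nearest P x ⊆ P := fun _ hp => hp.1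

theorem dist_eq_of_mem_nearest {P : Set Plane} {x p q : Plane} (hp : p ∈ nearest P x)
    (hq : q ∈ nearest P x) : dist x p = dist x q :=
  (hp.2 q hq.1).antisymm (hq.2 p hp.1)

theorem subset_nearest {P S : Set Plane} {x : Plane} {ρ : ℝ} (hSP : S ⊆ P)
    (hS : ∀ s ∈ S, dist x s = ρ) (hP : ∀ q ∈ P, ρ ≤ dist x q) : S ⊆ nearest P x :=
  fun s hs => ⟨hSP hs, fun q hq => hS s hs ▸ hP q hq⟩

theorem vtx_eq_empty_of_encard_le_two {P : Set Plane} (h : P.encard ≤ 2) : vtx P = ∅ :=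
  eq_empty_of_forall_notMem fun x hx =>
    absurd (hx.trans ((encard_mono (nearest_subset P x)).trans h)) (by decide)

theorem mem_vtx_of_subset_nearest {P : Set Plane} {x p q r : Plane}
    (h : ¬Collinear ℝ {p, q, r}) (hsub : {p, q, r} ⊆ nearest P x) : x ∈ vtx P := by
  have : ({p, q, r} : Set Plane).encard = 3 := encard_eq_three.2
    ⟨p, q, r, ne₁₂_of_not_collinear h, ne₁₃_of_not_collinear h, ne₂₃_of_not_collinear h, rfl⟩
  exact this.ge.trans (encard_mono hsub)

theorem nearest_eq_of_mem_vtx {P : Set Plane} {x p q r : Plane} (hx : x ∈ vtx P)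
    (hsub : nearest P x ⊆ {p, q, r}) : nearest P x = {p, q, r} :=
  (toFinite _).eq_of_subset_of_encard_le' hsub <| by
    grw [encard_insert_le, encard_insert_le, encard_singleton]
    exact hx

theorem not_subset_nearest_of_mem_interior_convexHull {P S : Set Plane} {x d : Plane}
    (hdP : d ∈ P) (hd : d ∈ interior (convexHull ℝ S)) : ¬S ⊆ nearest P x := by
  intro hS
  have := dist_lt_of_mem_interior_convexHull hd fun s hs =>
    mem_closedBall_comm.1 ((hS hs).2 d hdP)
  exact (dist_comm d x ▸ this).false

theorem dist_eq_of_nearest_eq {P : Set Plane} {x p q r : Plane}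
    (h : nearest P x = {p, q, r}) : dist x p = dist x q ∧ dist x p = dist x r := by
  have hmem : ∀ s ∈ ({p, q, r} : Set Plane), s ∈ nearest P x := fun s hs => by rwa [h]
  exact ⟨dist_eq_of_mem_nearest (hmem p (by simp)) (hmem q (by simp)),
    dist_eq_of_mem_nearest (hmem p (by simp)) (hmem r (by simp))⟩

theorem exists_vtx_eq_singleton {p q r : Plane} (h : ¬Collinear ℝ {p, q, r}) :
    ∃ o, vtx {p, q, r} = {o} := by
  obtain ⟨o, ho, huniq⟩ := existsUnique_dist_eq_of_not_collinear h
  refine ⟨o, Set.ext fun x => ⟨fun hx => huniq x ?_, ?_⟩⟩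
  · exact dist_eq_of_nearest_eq (nearest_eq_of_mem_vtx hx (nearest_subset _ _))
  · rintro rfl
    have hS : ∀ s ∈ ({p, q, r} : Set Plane), dist x s = dist x p := by
      rintro s (rfl | rfl | rfl)
      exacts [rfl, ho.1.symm, ho.2.symm]
    exact mem_vtx_of_subset_nearest h <|
      subset_nearest subset_rfl hS fun s hs => (hS s hs).ge

section InteriorPoint

variable {a b c d : Plane}

theorem exists_mem_vtx_and_notMem_nearest_iff (hd : d ∈ interior (convexHull ℝ {a, b, c})) :
    ∃ o, (dist o a < dist o c ∧ dist o a = dist o b ∧ dist o a = dist o d) ∧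
      ∀ x, x ∈ vtx (insert d {a, b, c}) ∧ c ∉ nearest (insert d {a, b, c}) x ↔ x = o := by
  have habd : ¬Collinear ℝ {a, b, d} := not_collinear_of_mem_interior_convexHull hd
  obtain ⟨o, ho, huniq⟩ := existsUnique_dist_eq_of_not_collinear habd
  have hc := dist_lt_of_mem_interior_triangle hd ho.1 ho.2
  refine ⟨o, ⟨hc, ho⟩, fun x => ⟨fun ⟨hx, hcx⟩ => huniq x ?_, ?_⟩⟩
  · refine dist_eq_of_nearest_eq (nearest_eq_of_mem_vtx hx fun p hp => ?_)
    obtain (rfl | rfl | rfl | rfl) := nearest_subset _ _ hp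
    · simp
    · simp
    · simp
    · exact absurd hp hcx
  · rintro rfl
    have hS : ∀ s ∈ ({a, b, d} : Set Plane), dist x s = dist x a := by
      rintro s (rfl | rfl | rfl)
      exacts [rfl, ho.1.symm, ho.2.symm]
    have hP : ∀ q ∈ insert d ({a, b, c} : Set Plane), dist x a ≤ dist x q := by
      rintro q (rfl | rfl | rfl | rfl)
      exacts [ho.2.le, le_rfl, ho.1.le, hc.le]
    refine ⟨mem_vtx_of_subset_nearest habd (subset_nearest ?_ hS hP),
      fun hcx => (hcx.2 a (by simp)).not_gt hc⟩
    simp [insert_subset_iff]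

theorem exists_vtx_insert_eq (hd : d ∈ interior (convexHull ℝ {a, b, c})) :
    ∃ o₁ o₂ o₃, ¬Collinear ℝ {o₁, o₂, o₃} ∧ vtx (insert d {a, b, c}) = {o₁, o₂, o₃} := by
  have hacb : ({a, c, b} : Set Plane) = {a, b, c} := by rw [pair_comm]
  have hbca : ({b, c, a} : Set Plane) = {a, b, c} := by
    ext; simp only [mem_insert_iff, mem_singleton_iff]; tauto
  obtain ⟨o₁, ⟨h₁a, -, h₁d⟩, hv₁⟩ :=
    exists_mem_vtx_and_notMem_nearest_iff (c := a) (hbca ▸ hd)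
  obtain ⟨o₂, ⟨h₂b, -, h₂d⟩, hv₂⟩ :=
    exists_mem_vtx_and_notMem_nearest_iff (c := b) (hacb ▸ hd)
  obtain ⟨o₃, ⟨-, h₃b, h₃d⟩, hv₃⟩ := exists_mem_vtx_and_notMem_nearest_iff hd
  rw [hbca] at hv₁
  rw [hacb] at hv₂
  refine ⟨o₁, o₂, o₃, ?_, Set.ext fun x => ?_⟩
  · -- `o₂` and `o₃` lie on the perpendicular bisector of `a d`, but `o₁` is nearer to `d` than `a`.
    refine not_collinear_of_mem_of_notMem (s := AffineSubspace.perpBisector a d) ?_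
      (AffineSubspace.mem_perpBisector_iff_dist_eq.2 h₂d)
      (AffineSubspace.mem_perpBisector_iff_dist_eq.2 h₃d) ?_
    · rw [AffineSubspace.mem_perpBisector_iff_dist_eq, ← h₁d]
      exact h₁a.ne'
    · rintro rfl
      exact h₂b.ne h₃b
  · have hx := not_subset_nearest_of_mem_interior_convexHull (x := x)
      (mem_insert d ({a, b, c} : Set Plane)) hd
    simp only [insert_subset_iff, singleton_subset_iff, not_and_or] at hx
    rw [mem_insert_iff, mem_insert_iff, mem_singleton_iff, ← hv₁, ← hv₂, ← hv₃]
    tauto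

end InteriorPoint

theorem mem_interior_convexHull_of_notMem_Bd {P : Set Plane} {p : Plane} (hp : p ∈ P)
    (hbd : p ∉ Bd P) : p ∈ interior (convexHull ℝ P) := by
  rw [← self_sdiff_frontier]
  exact ⟨subset_convexHull ℝ P hp, fun h => hbd ⟨hp, h⟩⟩

theorem exists_eq_insert_of_ncard_Bd_eq_three {P : Set Plane} (h4 : P.ncard = 4)
    (hbd : (Bd P).ncard = 3) :
    ∃ a b c d, d ∈ interior (convexHull ℝ {a, b, c}) ∧ P = insert d {a, b, c} := by
  have hP : P.Finite := finite_of_ncard_pos (by omega)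
  have hBdP : Bd P ⊆ P := inter_subset_left
  obtain ⟨d, hdP, hdBd⟩ := exists_of_ssubset <| hBdP.ssubset_of_ne fun h => by
    rw [h] at hbd; omega
  have hBd : P \ {d} = Bd P := by
    refine (eq_of_subset_of_ncard_le (t := P \ {d}) (fun p hp => ⟨hBdP hp, ?_⟩) ?_
      hP.sdiff).symm
    · rintro rfl
      exact hdBd hp
    · rw [ncard_sdiff_singleton_of_mem hdP, h4, hbd]
  obtain ⟨a, b, c, -, -, -, habc⟩ := ncard_eq_three.1 hbd
  refine ⟨a, b, c, d, ?_, ?_⟩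
  · rw [← habc, ← hBd, convexHull_sdiff_singleton_of_mem_interior hP
      (mem_interior_convexHull_of_notMem_Bd hdP hdBd)]
    exact mem_interior_convexHull_of_notMem_Bd hdP hdBd
  · rw [← habc, ← hBd, insert_sdiff_singleton, insert_eq_of_mem hdP]

theorem four_points_three_on_boundary_general (P : Set Plane)
    (h4 : P.ncard = 4) (hbd : (Bd P).ncard = 3) :
    (vtx P).ncard = 3 ∧ (vtx^[2] P).ncard = 1 ∧
      ∀ n : ℕ, 3 ≤ n → vtx^[n] P = ∅ := by
  obtain ⟨a, b, c, d, hd, rfl⟩ := exists_eq_insert_of_ncard_Bd_eq_three h4 hbd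
  obtain ⟨o₁, o₂, o₃, ho, hvtx⟩ := exists_vtx_insert_eq hd
  obtain ⟨z, hz⟩ := exists_vtx_eq_singleton ho
  have hvtx₂ : vtx^[2] (insert d {a, b, c}) = {z} := by
    rw [Function.iterate_succ_apply', Function.iterate_one, hvtx, hz]
  refine ⟨?_, by rw [hvtx₂, ncard_singleton], fun n hn => ?_⟩
  · rw [hvtx]
    exact ncard_eq_three.2 ⟨o₁, o₂, o₃, ne₁₂_of_not_collinear ho, ne₁₃_of_not_collinear ho,
      ne₂₃_of_not_collinear ho, rfl⟩
  · have hvtx₃ : vtx^[3] (insert d {a, b, c}) = ∅ := by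
      rw [Function.iterate_succ_apply', hvtx₂, vtx_eq_empty_of_encard_le_two (by simp)]
    obtain ⟨k, rfl⟩ := Nat.exists_eq_add_of_le' hn
    rw [Function.iterate_add_apply, hvtx₃]
    exact Function.iterate_fixed (vtx_eq_empty_of_encard_le_two (by simp)) k

theorem four_points_three_on_boundary (P : Set Plane) (hP : P.Finite)
    (h4 : P.ncard = 4) (hbd : (Bd P).ncard = 3) :
    (vtx P).ncard = 3 ∧ (vtx^[2] P).ncard = 1 ∧
      ∀ n : ℕ, 3 ≤ n → vtx^[n] P = ∅ :=
  four_points_three_on_boundary_general P h4 hbd
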